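/- Let ψ and φ be permutation-symmetric states of n ≥ 3 qudits and suppose there exist invertible d×d matrices A_1,…,A_n with (A_1 ⊗ A_2 ⊗ ⋯ ⊗ A_n) ψ = φ. Then there exists a single invertible d×d matrix A with A^{⊗n} ψ = φ. -/

import Mathlib

open Matrix BigOperators Polynomial

/-- Permutation symmetry of an `n`-qudit state represented by its amplitudes. -/
def PSym {n d : ℕ} (ψ : (Fin n → Fin d) → ℂ) : Prop :=
  ∀ σ : Equiv.Perm (Fin n), ∀ x : Fin n → Fin d, ψ (x ∘ σ) = ψ x

/-- The operator `B` acting on the `k`-th tensor factor (identity elsewhere). -/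
noncomputable def appAt {n d : ℕ} (k : Fin n) (B : Matrix (Fin d) (Fin d) ℂ)
    (ψ : (Fin n → Fin d) → ℂ) : (Fin n → Fin d) → ℂ :=
  fun x => ∑ j : Fin d, B (x k) j * ψ (Function.update x k j)

/-- The operator `A 1 ⊗ A 2 ⊗ ⋯ ⊗ A n` acting on an `n`-qudit state. -/
noncomputable def appAll {n d : ℕ} (A : Fin n → Matrix (Fin d) (Fin d) ℂ)
    (ψ : (Fin n → Fin d) → ℂ) : (Fin n → Fin d) → ℂ :=
  fun x => ∑ y : Fin n → Fin d, (∏ k, A k (x k) (y k)) * ψ y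

/-!
Swapping two sites `i ≠ j` and using the symmetry of `ψ` and `φ` shows that `A i⁻¹ * A j` acts
on `ψ` in the same way at sites `i` and `j`, hence, by symmetry, at every site. Matrices acting on
`ψ` independently of the site form an algebra once `n ≥ 3`, and for such matrices
`C 0 ⊗ ⋯ ⊗ C (n-1)` acts on `ψ` as the product `C 0 * ⋯ * C (n-1)` acting at one site. An
invertible complex matrix has an `n`-th root `D` that is a polynomial in it, so with
`C k = A 0⁻¹ * A k` the root `D` of their product again acts site-independently, and
`B = A 0 * D` satisfies `B^{⊗n} ψ = φ`.
-/

/-- Newton's step for `r ^ n = x`: with `u * (n * r ^ (n - 1)) ≡ 1 [mod a]`, the correction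
`r' = r - u * (r ^ n - x)` squares the modulus. -/
theorem exists_sq_dvd_pow_sub {R : Type*} [CommRing R] {n : ℕ} {a x r : R}
    (h : a ∣ r ^ n - x) (hr : IsCoprime ((n : R) * r ^ (n - 1)) a) :
    ∃ r', a ^ 2 ∣ r' ^ n - x := by
  obtain ⟨g, hg⟩ := h
  obtain ⟨u, v, huv⟩ := hr
  obtain ⟨k, hk⟩ := (X ^ n : R[X]).binomExpansion r (-(u * g * a))
  simp only [eval_pow, eval_X, derivative_X_pow, eval_mul, eval_C] at hk
  refine ⟨r + -(u * g * a), v * g + k * (u * g) ^ 2, ?_⟩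
  linear_combination hk + hg - g * a * huv

theorem exists_pow_dvd_pow_sub {R : Type*} [CommRing R] {n : ℕ} (hn : IsUnit (n : R))
    {a x r : R} (hx : IsCoprime x a) (h : a ∣ r ^ n - x) (m : ℕ) :
    ∃ r', a ^ m ∣ r' ^ n - x := by
  suffices ∀ k, ∃ r', a ^ 2 ^ k ∣ r' ^ n - x by
    obtain ⟨r', hr'⟩ := this m
    exact ⟨r', (pow_dvd_pow a (Nat.lt_two_pow_self).le).trans hr'⟩
  intro k
  induction k with
  | zero => exact ⟨r, by simpa using h⟩
  | succ k ih =>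
    obtain ⟨r', g, hg⟩ := ih
    have hr'n : IsCoprime (r' ^ n) (a ^ 2 ^ k) := by
      simpa [← hg] using (hx.pow_right (n := 2 ^ k)).add_mul_left_left g
    have hr' : IsCoprime ((n : R) * r' ^ (n - 1)) (a ^ 2 ^ k) :=
      (isCoprime_mul_unit_left_left hn _ _).mpr
        (hr'n.of_isCoprime_of_dvd_left (pow_dvd_pow r' (n.sub_le 1)))
    obtain ⟨r'', hr''⟩ := exists_sq_dvd_pow_sub ⟨g, hg⟩ hr'
    exact ⟨r'', by rwa [pow_succ, pow_mul]⟩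

theorem Polynomial.dvd_pow_prod_roots_X_sub_C {K : Type*} [Field K] [IsAlgClosed K]
    [DecidableEq K] {q : K[X]} (hq : q ≠ 0) :
    q ∣ (∏ z ∈ q.roots.toFinset, (X - C z)) ^ q.roots.card :=
  calc q = C q.leadingCoeff * (q.roots.map (X - C ·)).prod :=
        (C_leadingCoeff_mul_prod_multiset_X_sub_C IsAlgClosed.card_roots_eq_natDegree).symm
    _ ∣ (q.roots.map fun _ => ∏ z ∈ q.roots.toFinset, (X - C z)).prod :=
        (isUnit_C.mpr (leadingCoeff_ne_zero.mpr hq).isUnit).mul_left_dvd.mpr <|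
          Multiset.prod_dvd_prod_of_dvd _ _ fun z hz =>
            Finset.dvd_prod_of_mem _ (Multiset.mem_toFinset.mpr hz)
    _ = _ := by simp

/-- Interpolate `n`-th roots at the distinct roots of `q`, then lift by Newton iteration modulo
powers of `∏ (X - C z)`. -/
theorem Polynomial.exists_dvd_pow_sub_X {K : Type*} [Field K] [IsAlgClosed K] {n : ℕ}
    [NeZero (n : K)] {q : K[X]} (hq : q.eval 0 ≠ 0) : ∃ r : K[X], q ∣ r ^ n - X := by
  classical
  set S := q.roots.toFinset
  choose w hw using fun z : K => IsSepClosed.exists_pow_nat_eq z n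
  have hroot : (∏ z ∈ S, (X - C z)) ∣ (Lagrange.interpolate S id w) ^ n - X := by
    refine Finset.prod_dvd_of_coprime
      ((pairwise_coprime_X_sub_C Function.injective_id).set_pairwise _) fun z hz => ?_
    rw [dvd_iff_isRoot, IsRoot, eval_sub, eval_pow, eval_X,
      ← id_eq z, Lagrange.eval_interpolate_at_node w (Set.injOn_id _) hz, id_eq, hw, sub_self]
  have hX : IsCoprime X (∏ z ∈ S, (X - C z)) := by
    refine IsCoprime.prod_right fun z hz => ?_
    have hz0 : z ≠ 0 := by
      rintro rfl
      rw [Multiset.mem_toFinset, mem_roots'] at hz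
      exact hq hz.2
    simpa using isCoprime_X_sub_C_of_isUnit_sub (a := 0) (b := z) (by simpa using hz0)
  have hn : IsUnit (n : K[X]) := by
    rw [← map_natCast C]; exact isUnit_C.mpr (IsUnit.mk0 _ (NeZero.ne _))
  obtain ⟨r, hr⟩ := exists_pow_dvd_pow_sub hn hX hroot q.roots.card
  have hq0 : q ≠ 0 := by rintro rfl; simp at hq
  exact ⟨r, (dvd_pow_prod_roots_X_sub_C hq0).trans hr⟩

theorem Matrix.exists_aeval_pow_eq {K ι : Type*} [Field K] [IsAlgClosed K] [Fintype ι]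
    [DecidableEq ι] {n : ℕ} [NeZero (n : K)] {Q : Matrix ι ι K} (hQ : IsUnit Q.det) :
    ∃ p : K[X], aeval Q p ^ n = Q := by
  have hq : Q.charpoly.eval 0 ≠ 0 := by
    rw [← coeff_zero_eq_eval_zero]
    intro h0
    rw [Matrix.det_eq_sign_charpoly_coeff, h0, mul_zero] at hQ
    exact not_isUnit_zero hQ
  obtain ⟨r, g, hg⟩ := exists_dvd_pow_sub_X (n := n) hq
  refine ⟨r, ?_⟩
  have := congrArg (aeval Q) hg
  rwa [map_mul, aeval_self_charpoly, zero_mul, map_sub, map_pow, aeval_X, sub_eq_zero] at this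

section Qudits

variable {n d : ℕ}

theorem appAt_mul (k : Fin n) (M N : Matrix (Fin d) (Fin d) ℂ) (ψ : (Fin n → Fin d) → ℂ) :
    appAt k M (appAt k N ψ) = appAt k (M * N) ψ := by
  funext x
  simp only [appAt, Function.update_idem, Function.update_self, mul_apply, Finset.mul_sum,
    Finset.sum_mul]
  rw [Finset.sum_comm]
  exact Finset.sum_congr rfl fun l _ => Finset.sum_congr rfl fun j _ => by ring

theorem appAt_comm {i j : Fin n} (hij : i ≠ j) (M N : Matrix (Fin d) (Fin d) ℂ)
    (ψ : (Fin n → Fin d) → ℂ) : appAt i M (appAt j N ψ) = appAt j N (appAt i M ψ) := by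
  funext x
  simp only [appAt, Function.update_of_ne hij, Function.update_of_ne hij.symm, Finset.mul_sum,
    Function.update_comm hij]
  rw [Finset.sum_comm]
  exact Finset.sum_congr rfl fun l _ => Finset.sum_congr rfl fun j' _ => by ring

theorem appAt_one (k : Fin n) (ψ : (Fin n → Fin d) → ℂ) : appAt k 1 ψ = ψ := by
  funext x
  simp [appAt, one_apply]

theorem appAt_add (k : Fin n) (M N : Matrix (Fin d) (Fin d) ℂ) (ψ : (Fin n → Fin d) → ℂ) :
    appAt k (M + N) ψ = appAt k M ψ + appAt k N ψ := by
  funext x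
  simp [appAt, add_mul, Finset.sum_add_distrib]

theorem appAt_smul (k : Fin n) (c : ℂ) (M : Matrix (Fin d) (Fin d) ℂ) (ψ : (Fin n → Fin d) → ℂ) :
    appAt k (c • M) ψ = c • appAt k M ψ := by
  funext x
  simp [appAt, Finset.mul_sum, mul_assoc]

theorem appAll_mul (A B : Fin n → Matrix (Fin d) (Fin d) ℂ) (ψ : (Fin n → Fin d) → ℂ) :
    appAll A (appAll B ψ) = appAll (A * B) ψ := by
  funext x
  simp only [appAll, Finset.mul_sum, Pi.mul_apply, mul_apply]
  rw [Finset.sum_comm]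
  refine Finset.sum_congr rfl fun z _ => ?_
  rw [Fintype.prod_sum (fun k j => A k (x k) j * B k j (z k)), Finset.sum_mul]
  exact Finset.sum_congr rfl fun y _ => by rw [Finset.prod_mul_distrib, mul_assoc]

theorem appAll_one (ψ : (Fin n → Fin d) → ℂ) : appAll (fun _ => 1) ψ = ψ := by
  funext x
  simp [appAll, one_apply, Finset.prod_boole, ← funext_iff]

theorem appAll_update_one (i : Fin n) (M : Matrix (Fin d) (Fin d) ℂ) (ψ : (Fin n → Fin d) → ℂ) :
    appAll (Function.update 1 i M) ψ = appAt i M ψ := by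
  funext x
  refine (Fintype.sum_of_injective (Function.update x i) (Function.update_injective x i) _ _
    (fun y hy => ?_) fun j => ?_).symm
  · obtain ⟨k, hki, hyk⟩ : ∃ k ≠ i, y k ≠ x k := by
      by_contra! hc
      exact hy ⟨y i, funext fun k => by
        by_cases hk : k = i
        · subst hk; simp
        · simp [Function.update_of_ne hk, hc k hk]⟩
    rw [Finset.prod_eq_zero (Finset.mem_univ k) (by simp [hki, one_apply, Ne.symm hyk]), zero_mul]
  · rw [Fintype.prod_eq_single i fun k hk => by simp [hk]]
    simp

theorem appAll_injective {A : Fin n → Matrix (Fin d) (Fin d) ℂ} (hA : ∀ k, IsUnit (A k).det) :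
    Function.Injective (appAll A) :=
  Function.LeftInverse.injective (g := appAll fun k => (A k)⁻¹) fun ψ => by
    rw [appAll_mul, show ((fun k => (A k)⁻¹) * A) = fun _ => 1 from
      funext fun k => nonsing_inv_mul _ (hA k), appAll_one]

theorem PSym.appAt_comp_perm {ψ : (Fin n → Fin d) → ℂ} (hψ : PSym ψ) (σ : Equiv.Perm (Fin n))
    (k : Fin n) (M : Matrix (Fin d) (Fin d) ℂ) (x : Fin n → Fin d) :
    appAt k M ψ (x ∘ σ) = appAt (σ k) M ψ x := by
  simp only [appAt, Function.comp_apply]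
  refine Finset.sum_congr rfl fun j _ => ?_
  rw [← hψ σ (Function.update x (σ k) j), Function.update_comp_equiv, Equiv.symm_apply_apply]

theorem PSym.appAll_comp_perm {ψ : (Fin n → Fin d) → ℂ} (hψ : PSym ψ)
    (A : Fin n → Matrix (Fin d) (Fin d) ℂ) (σ : Equiv.Perm (Fin n)) (x : Fin n → Fin d) :
    appAll (A ∘ σ) ψ (x ∘ σ) = appAll A ψ x := by
  simp only [appAll, Function.comp_apply]
  refine Fintype.sum_bijective _ (σ.arrowCongr (Equiv.refl (Fin d))).bijective _ _ fun y => ?_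
  rw [show σ.arrowCongr (Equiv.refl (Fin d)) y = y ∘ σ.symm from rfl, hψ,
    ← Equiv.prod_comp σ fun k => A k (x k) ((y ∘ σ.symm) k)]
  simp

theorem PSym.appAt_eq_of_appAt_eq {ψ : (Fin n → Fin d) → ℂ} (hψ : PSym ψ)
    {M : Matrix (Fin d) (Fin d) ℂ} {i j : Fin n} (hij : i ≠ j) (h : appAt i M ψ = appAt j M ψ)
    (k : Fin n) : appAt k M ψ = appAt i M ψ := by
  by_cases hki : k = i
  · rw [hki]
  have hσi : Equiv.swap j k i = i := Equiv.swap_apply_of_ne_of_ne hij (Ne.symm hki)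
  funext x
  calc appAt k M ψ x = appAt j M ψ (x ∘ Equiv.swap j k) := by
        rw [hψ.appAt_comp_perm, Equiv.swap_apply_left]
    _ = appAt i M ψ x := by rw [← h, hψ.appAt_comp_perm, hσi]

def balancedSubalgebra (hn : 3 ≤ n) (ψ : (Fin n → Fin d) → ℂ) :
    Subalgebra ℂ (Matrix (Fin d) (Fin d) ℂ) where
  carrier := {M | ∀ i j, appAt i M ψ = appAt j M ψ}
  mul_mem' {M N} hM hN i j := by
    -- `N` is parked at a third site `k` while `M` moves from `i` to `j`.
    obtain ⟨k, hki, hkj⟩ := Fin.exists_ne_and_ne_of_two_lt i j hn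
    calc appAt i (M * N) ψ = appAt i M (appAt k N ψ) := by rw [← hN i k, appAt_mul]
      _ = appAt k N (appAt j M ψ) := by rw [appAt_comm hki.symm, hM i j]
      _ = appAt j (M * N) ψ := by rw [← appAt_comm hkj.symm, hN k j, appAt_mul]
  add_mem' {M N} hM hN i j := by simp only [appAt_add, hM i j, hN i j]
  algebraMap_mem' c i j := by simp [Algebra.algebraMap_eq_smul_one, appAt_smul, appAt_one]

theorem appAll_ite_mem_eq_appAt_prod {hn : 3 ≤ n} {ψ : (Fin n → Fin d) → ℂ}
    {C : Fin n → Matrix (Fin d) (Fin d) ℂ} (hC : ∀ k, C k ∈ balancedSubalgebra hn ψ)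
    (i₀ : Fin n) {l : List (Fin n)} (hl : l.Nodup) :
    appAll (fun k => if k ∈ l then C k else 1) ψ = appAt i₀ (l.map C).prod ψ := by
  induction l with
  | nil => simpa [appAt_one] using appAll_one ψ
  | cons i l ih =>
    obtain ⟨hil, hl⟩ := List.nodup_cons.mp hl
    have hprod : (l.map C).prod ∈ balancedSubalgebra hn ψ :=
      Subalgebra.list_prod_mem _ (by simpa using fun k _ => hC k)
    have hfam : (fun k => if k ∈ i :: l then C k else 1)
        = Function.update (1 : Fin n → Matrix (Fin d) (Fin d) ℂ) i (C i)
          * fun k => if k ∈ l then C k else 1 := by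
      funext k
      by_cases hki : k = i
      · subst hki; simp [hil]
      · simp [hki]
    rw [hfam, ← appAll_mul, ih hl, appAll_update_one, hprod i₀ i, appAt_mul, List.map_cons,
      List.prod_cons, mul_mem (hC i) hprod i i₀]

theorem appAll_eq_appAt_prod {hn : 3 ≤ n} {ψ : (Fin n → Fin d) → ℂ}
    {C : Fin n → Matrix (Fin d) (Fin d) ℂ} (hC : ∀ k, C k ∈ balancedSubalgebra hn ψ)
    (i₀ : Fin n) : appAll C ψ = appAt i₀ (List.ofFn C).prod ψ := by
  simpa [List.ofFn_eq_map] using appAll_ite_mem_eq_appAt_prod hC i₀ (List.nodup_finRange n)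

theorem appAt_inv_mul_eq_of_appAll_eq {ψ φ : (Fin n → Fin d) → ℂ} (hψ : PSym ψ) (hφ : PSym φ)
    {A : Fin n → Matrix (Fin d) (Fin d) ℂ} (hA : ∀ k, IsUnit (A k).det) (h : appAll A ψ = φ)
    {i j : Fin n} (hij : i ≠ j) :
    appAt i ((A i)⁻¹ * A j) ψ = appAt j ((A i)⁻¹ * A j) ψ := by
  set C := (A i)⁻¹ * A j
  set F := Function.update A j (A i)
  have hF : ∀ k, IsUnit (F k).det := fun k => by
    simp only [F, Function.update_apply]
    split_ifs <;> apply hA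
  have hA_eq : A = F * Function.update (1 : Fin n → Matrix (Fin d) (Fin d) ℂ) j C := by
    funext k
    by_cases hk : k = j
    · subst hk; simp [F, C, mul_nonsing_inv_cancel_left _ _ (hA i)]
    · simp [F, hk]
  have hAσ_eq :
      A ∘ Equiv.swap i j = F * Function.update (1 : Fin n → Matrix (Fin d) (Fin d) ℂ) i C := by
    funext k
    by_cases hki : k = i
    · subst hki; simp [F, C, hij, mul_nonsing_inv_cancel_left _ _ (hA k)]
    by_cases hkj : k = j
    · subst hkj; simp [F, hki]
    · simp [F, hki, hkj, Equiv.swap_apply_of_ne_of_ne]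
  have hswap : appAll (A ∘ Equiv.swap i j) ψ = appAll A ψ := funext fun x => by
    have := hψ.appAll_comp_perm A (Equiv.swap i j) (x ∘ Equiv.swap i j)
    rw [show (x ∘ Equiv.swap i j) ∘ Equiv.swap i j = x by ext; simp] at this
    rw [this, h, hφ]
  apply appAll_injective hF
  calc appAll F (appAt i C ψ) = appAll (A ∘ Equiv.swap i j) ψ := by
        rw [← appAll_update_one, appAll_mul, hAσ_eq]
    _ = appAll F (appAt j C ψ) := by rw [hswap, ← appAll_update_one, appAll_mul, ← hA_eq]

theorem inv_mul_mem_balancedSubalgebra (hn : 3 ≤ n) {ψ φ : (Fin n → Fin d) → ℂ} (hψ : PSym ψ)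
    (hφ : PSym φ) {A : Fin n → Matrix (Fin d) (Fin d) ℂ} (hA : ∀ k, IsUnit (A k).det)
    (h : appAll A ψ = φ) (i j : Fin n) : (A i)⁻¹ * A j ∈ balancedSubalgebra hn ψ := by
  by_cases hij : i = j
  · rw [hij, nonsing_inv_mul _ (hA j)]
    exact one_mem _
  · have hpair := appAt_inv_mul_eq_of_appAll_eq hψ hφ hA h hij
    exact fun a b => by
      rw [hψ.appAt_eq_of_appAt_eq hij hpair a, hψ.appAt_eq_of_appAt_eq hij hpair b]

end Qudits

theorem stmt_8 {n d : ℕ} (hn : 3 ≤ n) (ψ φ : (Fin n → Fin d) → ℂ)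
    (hψ : PSym ψ) (hφ : PSym φ)
    (A : Fin n → Matrix (Fin d) (Fin d) ℂ) (hA : ∀ i, IsUnit (A i).det)
    (h : appAll A ψ = φ) :
    ∃ B : Matrix (Fin d) (Fin d) ℂ, IsUnit B.det ∧ appAll (fun _ => B) ψ = φ := by
  let i₀ : Fin n := ⟨0, by omega⟩
  set C : Fin n → Matrix (Fin d) (Fin d) ℂ := fun k => (A i₀)⁻¹ * A k
  have hC : ∀ k, C k ∈ balancedSubalgebra hn ψ := inv_mul_mem_balancedSubalgebra hn hψ hφ hA h i₀
  set Q := (List.ofFn C).prod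
  have hQ : Q ∈ balancedSubalgebra hn ψ :=
    Subalgebra.list_prod_mem _ (List.forall_mem_ofFn_iff.mpr hC)
  have hQ_det : IsUnit Q.det := by
    refine (isUnit_iff_isUnit_det Q).mp (List.prod_isUnit ?_)
    refine List.forall_mem_ofFn_iff.mpr fun k => (isUnit_iff_isUnit_det _).mpr ?_
    rw [det_mul]
    exact (isUnit_nonsing_inv_det _ (hA i₀)).mul (hA k)
  have : NeZero (n : ℂ) := ⟨Nat.cast_ne_zero.mpr (by omega)⟩
  obtain ⟨p, hp⟩ := exists_aeval_pow_eq (n := n) hQ_det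
  have hD : aeval Q p ∈ balancedSubalgebra hn ψ :=
    Algebra.adjoin_le (Set.singleton_subset_iff.mpr hQ) (aeval_mem_adjoin_singleton ℂ Q)
  have hD_det : IsUnit (aeval Q p).det :=
    (isUnit_pow_iff (n := n) (by omega)).mp (by rwa [← det_pow, hp])
  refine ⟨A i₀ * aeval Q p, by rw [det_mul]; exact (hA i₀).mul hD_det, ?_⟩
  calc appAll (fun _ => A i₀ * aeval Q p) ψ
        = appAll (fun _ => A i₀) (appAll (fun _ => aeval Q p) ψ) := (appAll_mul _ _ ψ).symm
    _ = appAll (fun _ => A i₀) (appAll C ψ) := by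
        rw [appAll_eq_appAt_prod (fun _ => hD) i₀, appAll_eq_appAt_prod hC i₀, List.ofFn_const,
          List.prod_replicate, hp]
    _ = φ := by
        rw [appAll_mul, ← h]
        congr 1
        funext k
        exact mul_nonsing_inv_cancel_left _ _ (hA i₀)
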